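/- arXiv:1801.00314 — 7 statements merged into one kernel-verified Lean document; each statement's English description precedes it below -/
import Mathlib

section
/- For N ≥ 1 and vectors a_1,…,a_N ∈ ℝ^n, the sum ∑_{k=1}^N √(1+|a_k|²) minus √(1+|∑_{k=1}^N a_k|²) is at least (N−1)/(∑_{k=1}^N √(1+|a_k|²) + √(1+|∑_{k=1}^N a_k|²)). -/
/-! Write `S = ∑ √(1 + ‖a k‖²)` and `T = √(1 + ‖∑ a k‖²)`. Expanding `S²` and bounding each
product `√(1 + ‖a h‖²) √(1 + ‖a k‖²)` below by `1 + ⟪a h, a k⟫` (Cauchy–Schwarz) gives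
`S² ≥ N² + ‖∑ a k‖² = N² - 1 + T²`, so `(S - T)(S + T) ≥ N² - 1 ≥ N - 1`. -/

open Finset

open scoped RealInnerProductSpace

section

variable {E : Type*} [NormedAddCommGroup E] [InnerProductSpace ℝ E]

theorem one_add_inner_le_sqrt_mul_sqrt (x y : E) :
    1 + ⟪x, y⟫ ≤ √(1 + ‖x‖ ^ 2) * √(1 + ‖y‖ ^ 2) := by
  rw [← Real.sqrt_mul (by positivity)]
  calc 1 + ⟪x, y⟫ ≤ 1 + ‖x‖ * ‖y‖ := by gcongr; exact real_inner_le_norm x y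
    _ ≤ √((1 + ‖x‖ ^ 2) * (1 + ‖y‖ ^ 2)) :=
      Real.le_sqrt_of_sq_le (by nlinarith [sq_nonneg (‖x‖ - ‖y‖)])

theorem norm_sum_sq_eq_sum_sum_inner {ι : Type*} (s : Finset ι) (a : ι → E) :
    ‖∑ i ∈ s, a i‖ ^ 2 = ∑ i ∈ s, ∑ j ∈ s, ⟪a i, a j⟫ := by
  rw [← real_inner_self_eq_norm_sq, sum_inner]
  simp_rw [inner_sum]

theorem card_sq_add_norm_sum_sq_le {ι : Type*} (s : Finset ι) (a : ι → E) :
    (#s : ℝ) ^ 2 + ‖∑ i ∈ s, a i‖ ^ 2 ≤ (∑ i ∈ s, √(1 + ‖a i‖ ^ 2)) ^ 2 :=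
  calc (#s : ℝ) ^ 2 + ‖∑ i ∈ s, a i‖ ^ 2 = ∑ i ∈ s, ∑ j ∈ s, (1 + ⟪a i, a j⟫) := by
        simp only [norm_sum_sq_eq_sum_sum_inner, sum_add_distrib, sum_const, nsmul_eq_mul,
          mul_one]
        ring
    _ ≤ ∑ i ∈ s, ∑ j ∈ s, √(1 + ‖a i‖ ^ 2) * √(1 + ‖a j‖ ^ 2) := by
        gcongr with i _ j _
        exact one_add_inner_le_sqrt_mul_sqrt (a i) (a j)
    _ = (∑ i ∈ s, √(1 + ‖a i‖ ^ 2)) ^ 2 := by rw [sq, sum_mul_sum]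

end

theorem double_bubble_elem_ineq_1_general (n N : ℕ)
    (a : Fin N → EuclideanSpace ℝ (Fin n)) :
    ((N : ℝ) - 1) /
        ((∑ k, Real.sqrt (1 + ‖a k‖ ^ 2)) + Real.sqrt (1 + ‖∑ k, a k‖ ^ 2)) ≤
      (∑ k, Real.sqrt (1 + ‖a k‖ ^ 2)) - Real.sqrt (1 + ‖∑ k, a k‖ ^ 2) := by
  set S := ∑ k, √(1 + ‖a k‖ ^ 2)
  set T := √(1 + ‖∑ k, a k‖ ^ 2)
  have hS : 0 ≤ S := sum_nonneg fun k _ ↦ Real.sqrt_nonneg _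
  have hT : 1 ≤ T := Real.one_le_sqrt.mpr (le_add_of_nonneg_right (sq_nonneg _))
  have hT_sq : T ^ 2 = 1 + ‖∑ k, a k‖ ^ 2 := Real.sq_sqrt (by positivity)
  have hS_sq : (N : ℝ) ^ 2 + ‖∑ k, a k‖ ^ 2 ≤ S ^ 2 := by
    simpa using card_sq_add_norm_sum_sq_le univ a
  have hN : (N : ℝ) ≤ N ^ 2 := by exact_mod_cast Nat.le_self_pow two_ne_zero N
  rw [div_le_iff₀ (by linarith)]
  calc (N : ℝ) - 1 ≤ S ^ 2 - T ^ 2 := by linarith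
    _ = (S - T) * (S + T) := by ring

theorem double_bubble_elem_ineq_1 (n N : ℕ) (hN : 1 ≤ N)
    (a : Fin N → EuclideanSpace ℝ (Fin n)) :
    ((N : ℝ) - 1) /
        ((∑ k, Real.sqrt (1 + ‖a k‖ ^ 2)) + Real.sqrt (1 + ‖∑ k, a k‖ ^ 2)) ≤
      (∑ k, Real.sqrt (1 + ‖a k‖ ^ 2)) - Real.sqrt (1 + ‖∑ k, a k‖ ^ 2) :=
  double_bubble_elem_ineq_1_general n N a
end

section
/- For N ≥ 1 and vectors a_1,…,a_N ∈ ℝ^n, one has ∑_{k=1}^N √(1+|a_k|²) − √(1+|∑_{k=1}^N a_k|²) ≥ (N−1)/(2 ∑_{k=1}^N √(1+|a_k|²)). -/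
open Finset

theorem double_bubble_elem_ineq_2 (n N : ℕ) (hN : 1 ≤ N)
    (a : Fin N → EuclideanSpace ℝ (Fin n)) :
    ((N : ℝ) - 1) / (2 * ∑ k, Real.sqrt (1 + ‖a k‖ ^ 2)) ≤
      (∑ k, Real.sqrt (1 + ‖a k‖ ^ 2)) - Real.sqrt (1 + ‖∑ k, a k‖ ^ 2) := by
  have _dummy : True := trivial
  set x := ‖∑ k, a k‖ with hx
  have hx0 : 0 ≤ x := norm_nonneg _
  have hN1 : (1:ℝ) ≤ N := by exact_mod_cast hN
  set u : ℝ := (N:ℝ)^2 + x^2 with hu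
  have hu1 : (1:ℝ) ≤ u := by nlinarith
  have hupos : (0:ℝ) < u := by linarith
  -- key: √u ≤ S
  have key : Real.sqrt u ≤ ∑ k, Real.sqrt (1 + ‖a k‖ ^ 2) := by
    have h := norm_sum_le Finset.univ
      (fun k => (WithLp.linearEquiv 2 ℝ (ℝ × EuclideanSpace ℝ (Fin n))).symm (1, a k))
    have hsum : ∑ k, (WithLp.linearEquiv 2 ℝ (ℝ × EuclideanSpace ℝ (Fin n))).symm (1, a k)
        = (WithLp.linearEquiv 2 ℝ (ℝ × EuclideanSpace ℝ (Fin n))).symm ((N : ℝ), ∑ k, a k) := by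
      rw [← map_sum]
      congr 1
      rw [Prod.ext_iff]
      constructor
      · simp [Prod.fst_sum]
      · simp [Prod.snd_sum]
    rw [hsum] at h
    have hnorm : ‖(WithLp.linearEquiv 2 ℝ (ℝ × EuclideanSpace ℝ (Fin n))).symm ((N : ℝ), ∑ k, a k)‖
        = Real.sqrt u := by
      rw [WithLp.prod_norm_eq_of_L2]
      simp [hu, hx, abs_of_nonneg (by positivity : (0:ℝ) ≤ (N:ℝ))]
    have hnorm2 : ∀ k, ‖(WithLp.linearEquiv 2 ℝ (ℝ × EuclideanSpace ℝ (Fin n))).symm (1, a k)‖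
        = Real.sqrt (1 + ‖a k‖ ^ 2) := by
      intro k
      rw [WithLp.prod_norm_eq_of_L2]
      norm_num
    rw [hnorm] at h
    calc Real.sqrt u ≤ _ := h
      _ = _ := by simp_rw [hnorm2]
  set S := ∑ k, Real.sqrt (1 + ‖a k‖ ^ 2) with hS
  have hsu : 0 < Real.sqrt u := Real.sqrt_pos.2 hupos
  have hSpos : 0 < S := lt_of_lt_of_le hsu key
  have hsq_u : Real.sqrt u ^ 2 = u := Real.sq_sqrt hupos.le
  set v : ℝ := 1 + x^2 with hv
  have hvpos : (0:ℝ) < v := by positivity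
  have hsq_v : Real.sqrt v ^ 2 = v := Real.sq_sqrt hvpos.le
  have hcross : Real.sqrt u * Real.sqrt v ≤ (u + v) / 2 := by
    nlinarith [sq_nonneg (Real.sqrt u - Real.sqrt v)]
  have huv : v ≤ u := by nlinarith
  have hTu : Real.sqrt v ≤ Real.sqrt u := Real.sqrt_le_sqrt huv
  -- core: (N-1)/(2√u) ≤ √u - √v
  have hcore : ((N:ℝ) - 1) / (2 * Real.sqrt u) ≤ Real.sqrt u - Real.sqrt v := by
    rw [div_le_iff₀ (by positivity)]
    nlinarith
  have h1 : ((N:ℝ) - 1) / (2 * S) ≤ ((N:ℝ) - 1) / (2 * Real.sqrt u) := by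
    apply div_le_div_of_nonneg_left (by linarith) (by positivity) (by linarith)
  calc ((N:ℝ) - 1) / (2 * S) ≤ ((N:ℝ) - 1) / (2 * Real.sqrt u) := h1
    _ ≤ Real.sqrt u - Real.sqrt v := hcore
    _ ≤ S - Real.sqrt v := by linarith
end

section
/- For α ≥ 0, the area of the Grushin isoperimetric set E_α equals ((α+1)/(α+2)) · P_α(E_α), where P_α(E_α) = 2∫_0^π sin^α(t) dt. Equivalently, 4∫_0^1 φ_α(x) dx = ((α+1)/(α+2)) · 2∫_0^π sin^α(t) dt. -/
/-!
Both sides reduce to integrals over `[0, π/2]`. On the area side, exchanging the order of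
integration (concretely: substituting `x = sin θ` and integrating by parts) turns
`∫₀¹ ∫_{arcsin x}^{π/2} f` into `∫₀^{π/2} sin θ · f θ`, so the area is `4 ∫₀^{π/2} sin^{α+2}`.
The perimeter is `4 ∫₀^{π/2} sin^α` by the symmetry `t ↦ π - t`, and the two are related by
the Wallis-type reduction `(α+2) ∫₀^{π/2} sin^{α+2} = (α+1) ∫₀^{π/2} sin^α`, which comes from
differentiating `-cos θ · sin^{α+1} θ`.
-/

open Real Set intervalIntegral

lemma integral_comp_arcsin {g : ℝ → ℝ} (hg : Continuous g) :
    ∫ x in (0 : ℝ)..1, g (arcsin x) = ∫ θ in (0 : ℝ)..(π / 2), cos θ * g θ := by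
  have hsubst := integral_comp_mul_deriv (a := 0) (b := π / 2) (fun θ _ => hasDerivAt_sin θ)
    continuous_cos.continuousOn (hg.comp continuous_arcsin)
  rw [sin_zero, sin_pi_div_two] at hsubst
  simp only [Function.comp_apply] at hsubst
  rw [← hsubst]
  refine integral_congr fun θ hθ => ?_
  rw [uIcc_of_le (by positivity)] at hθ
  simp only [arcsin_sin (by linarith [hθ.1, pi_pos]) hθ.2, mul_comm]

lemma integral_integral_arcsin_eq {f : ℝ → ℝ} (hf : Continuous f) :
    ∫ x in (0 : ℝ)..1, ∫ t in arcsin x..(π / 2), f t = ∫ θ in (0 : ℝ)..(π / 2), sin θ * f θ := by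
  set F : ℝ → ℝ := fun θ => ∫ t in θ..(π / 2), f t
  have hF : ∀ θ, HasDerivAt F (-f θ) θ := fun θ =>
    integral_hasDerivAt_left (hf.intervalIntegrable _ _) (hf.stronglyMeasurableAtFilter _ _)
      hf.continuousAt
  have hFc : Continuous F := continuous_iff_continuousAt.2 fun θ => (hF θ).continuousAt
  have hparts := integral_mul_deriv_eq_deriv_mul (a := 0) (b := π / 2) (fun θ _ => hF θ)
    (fun θ _ => hasDerivAt_sin θ) (hf.neg.intervalIntegrable _ _)
    (continuous_cos.intervalIntegrable _ _)
  have hF_end : F (π / 2) = 0 := integral_same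
  rw [hF_end, sin_zero] at hparts
  rw [integral_comp_arcsin hFc]
  simp only [mul_comm (cos _), hparts, neg_mul, integral_neg, zero_mul, mul_zero, sub_zero,
    zero_sub, neg_neg]
  exact integral_congr fun θ _ => mul_comm _ _

lemma integral_comp_sin_zero_pi_eq_two_mul {g : ℝ → ℝ} (hg : Continuous g) :
    ∫ t in (0 : ℝ)..π, g (sin t) = 2 * ∫ t in (0 : ℝ)..(π / 2), g (sin t) := by
  have hc : Continuous fun t => g (sin t) := hg.comp continuous_sin
  have hreflect : ∫ t in (π / 2)..π, g (sin t) = ∫ t in (0 : ℝ)..(π / 2), g (sin t) := by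
    simpa [sin_pi_sub, show π - π / 2 = π / 2 by ring] using
      (integral_comp_sub_left (a := 0) (b := π / 2) (fun t => g (sin t)) π).symm
  rw [← integral_add_adjacent_intervals (b := π / 2) (hc.intervalIntegrable _ _)
    (hc.intervalIntegrable _ _), hreflect, two_mul]

lemma sin_nonneg_of_mem_uIcc_zero_pi_div_two {θ : ℝ} (hθ : θ ∈ uIcc 0 (π / 2)) : 0 ≤ sin θ := by
  rw [uIcc_of_le (by positivity)] at hθ
  exact sin_nonneg_of_nonneg_of_le_pi hθ.1 (by linarith [hθ.2, pi_pos])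

lemma rpow_add_two_eq_mul_rpow_add_one {x p : ℝ} (hx : 0 ≤ x) (hp : p + 2 ≠ 0) :
    x ^ (p + 2) = x * x ^ (p + 1) := by
  rw [mul_comm, ← rpow_add_one' hx (by convert hp using 1; ring)]
  ring_nf

lemma hasDerivAt_neg_cos_mul_sin_rpow {p θ : ℝ} (hp : 0 ≤ p) (hθ : 0 ≤ sin θ) :
    HasDerivAt (fun θ => -cos θ * sin θ ^ (p + 1))
      ((p + 2) * sin θ ^ (p + 2) - (p + 1) * sin θ ^ p) θ := by
  have hpow := (hasDerivAt_sin θ).rpow_const (p := p + 1) (Or.inr (by linarith))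
  refine ((hasDerivAt_cos θ).neg.mul hpow).congr_deriv ?_
  have h1 : sin θ ^ (p + 1) = sin θ ^ p * sin θ := rpow_add_one' hθ (by linarith)
  rw [Pi.neg_apply, add_sub_cancel_right, rpow_add_two_eq_mul_rpow_add_one hθ (by linarith), h1]
  linear_combination (-(p + 1) * sin θ ^ p) * cos_sq_add_sin_sq θ

lemma mul_integral_sin_rpow_add_two {p : ℝ} (hp : 0 ≤ p) :
    (p + 2) * ∫ θ in (0 : ℝ)..(π / 2), sin θ ^ (p + 2) =
      (p + 1) * ∫ θ in (0 : ℝ)..(π / 2), sin θ ^ p := by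
  have hc2 : Continuous fun θ => (p + 2) * sin θ ^ (p + 2) :=
    continuous_const.mul (continuous_sin.rpow_const fun _ => Or.inr (by linarith))
  have hc0 : Continuous fun θ => (p + 1) * sin θ ^ p :=
    continuous_const.mul (continuous_sin.rpow_const fun _ => Or.inr hp)
  have hftc := integral_eq_sub_of_hasDerivAt
    (fun θ hθ => hasDerivAt_neg_cos_mul_sin_rpow hp (sin_nonneg_of_mem_uIcc_zero_pi_div_two hθ))
    ((hc2.sub hc0).intervalIntegrable 0 (π / 2))
  rw [integral_sub (hc2.intervalIntegrable _ _) (hc0.intervalIntegrable _ _), integral_const_mul,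
    integral_const_mul, cos_pi_div_two, sin_zero, zero_rpow (by linarith)] at hftc
  linarith

theorem grushin_isoperimetric_area_perimeter (α : ℝ) (hα : 0 ≤ α) :
    4 * (∫ x in (0 : ℝ)..1, ∫ t in Real.arcsin x..(Real.pi / 2), Real.sin t ^ (α + 1)) =
      ((α + 1) / (α + 2)) * (2 * ∫ t in (0 : ℝ)..Real.pi, Real.sin t ^ α) := by
  have harea : ∫ x in (0 : ℝ)..1, ∫ t in arcsin x..(π / 2), sin t ^ (α + 1) =
      ∫ θ in (0 : ℝ)..(π / 2), sin θ ^ (α + 2) := by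
    rw [integral_integral_arcsin_eq (continuous_sin.rpow_const fun _ => Or.inr (by linarith))]
    exact integral_congr fun θ hθ => (rpow_add_two_eq_mul_rpow_add_one
      (sin_nonneg_of_mem_uIcc_zero_pi_div_two hθ) (by linarith)).symm
  have hperimeter : ∫ t in (0 : ℝ)..π, sin t ^ α = 2 * ∫ t in (0 : ℝ)..(π / 2), sin t ^ α :=
    integral_comp_sin_zero_pi_eq_two_mul (g := fun s => s ^ α) (continuous_rpow_const hα)
  rw [harea, hperimeter, div_mul_eq_mul_div, eq_div_iff (by positivity)]
  linear_combination 4 * mul_integral_sin_rpow_add_two hα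
end

section
/- Let k < 0, α ≥ 0, r = −3/(2k), and define f : [0,r] → ℝ by f(x) = −(1/|k|^{α+1}) ∫_{−1}^{kx+1/2} t(1/2−t)^α/√(1−t²) dt. Then f(r) = 0, f(0) > 0, f is smooth on (0,r), and f'(x) = x^α(kx+1/2)/√(1−(kx+1/2)²) for all x ∈ (0,r). -/
set_option maxHeartbeats 1000000

open Filter Set ContDiff

lemma analyticAt_of_hasDerivAt {g G : ℝ → ℝ} {y₀ : ℝ}
    (hg : AnalyticAt ℝ g y₀) (hG : ∀ᶠ y in nhds y₀, HasDerivAt G (g y) y) :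
    AnalyticAt ℝ G y₀ := by
  obtain ⟨p, hp⟩ := hg
  rw [hasFPowerSeriesAt_iff] at hp
  set a : ℕ → ℝ := fun n => p.coeff n with ha
  -- find δ > 0 containing both eventual properties
  obtain ⟨δ, hδ0, hδ⟩ : ∃ δ > 0, ∀ z : ℝ, |z| < δ →
      HasSum (fun n => z ^ n • a n) (g (y₀ + z)) ∧ HasDerivAt G (g (y₀ + z)) (y₀ + z) := by
    have hten : Tendsto (fun z : ℝ => y₀ + z) (nhds 0) (nhds y₀) := by
      have : Tendsto (fun z : ℝ => y₀ + z) (nhds 0) (nhds (y₀ + 0)) :=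
        (tendsto_const_nhds.add tendsto_id)
      simpa using this
    have h2 : ∀ᶠ z in nhds (0:ℝ), HasDerivAt G (g (y₀ + z)) (y₀ + z) := hten.eventually hG
    obtain ⟨δ, hδ0, hδ⟩ := Metric.eventually_nhds_iff_ball.1 (hp.and h2)
    exact ⟨δ, hδ0, fun z hz => hδ z (by simpa [Real.dist_eq] using hz)⟩
  -- summable bound
  have hsum : Summable (fun n => (δ/2) ^ n • a n) :=
    ((hδ (δ/2) (by rw [abs_of_pos] <;> linarith)).1).summable
  obtain ⟨C, hC⟩ : ∃ C : ℝ, ∀ n, |a n| * (δ/2) ^ n ≤ C := by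
    have T : Tendsto (fun n => |a n| * (δ/2) ^ n) atTop (nhds 0) := by
      have h0 := hsum.tendsto_atTop_zero.norm
      rw [norm_zero] at h0
      refine h0.congr fun n => ?_
      rw [norm_smul, Real.norm_eq_abs, Real.norm_eq_abs, abs_pow,
        abs_of_pos (by linarith : (0:ℝ) < δ/2)]
      ring
    obtain ⟨C, hC⟩ := T.bddAbove_range
    exact ⟨C, fun n => hC ⟨n, rfl⟩⟩
  set t : ℝ := δ/4 with ht
  have ht0 : 0 < t := by positivity
  have htδ : t < δ := by rw [ht]; linarith
  have hu : Summable (fun n => C * (1/2:ℝ) ^ n) := (summable_geometric_two).mul_left C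
  have hbound : ∀ n (z : ℝ), |z| ≤ t → |a n * z ^ n| ≤ C * (1/2) ^ n := by
    intro n z hz
    have h1 : |z| ^ n ≤ t ^ n := pow_le_pow_left₀ (abs_nonneg z) hz n
    have h2 : t ^ n ≤ (δ/2) ^ n * (1/2) ^ n := by
      rw [← mul_pow]
      apply pow_le_pow_left₀ ht0.le
      rw [ht]; linarith
    calc |a n * z ^ n| = |a n| * |z| ^ n := by rw [abs_mul, abs_pow]
      _ ≤ |a n| * ((δ/2) ^ n * (1/2) ^ n) := by
          apply mul_le_mul_of_nonneg_left (h1.trans h2) (abs_nonneg _)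
      _ = (|a n| * (δ/2) ^ n) * (1/2) ^ n := by ring
      _ ≤ C * (1/2) ^ n := by
          apply mul_le_mul_of_nonneg_right (hC n) (by positivity)
  -- the antiderivative power series
  set h : ℕ → ℝ → ℝ := fun m y => (a m / (m+1)) * (y - y₀) ^ (m+1) with hh
  set H : ℝ → ℝ := fun y => ∑' m, h m y with hH
  have hderiv : ∀ m (y : ℝ), HasDerivAt (h m) (a m * (y - y₀) ^ m) y := by
    intro m y
    have : HasDerivAt (fun y : ℝ => (y - y₀) ^ (m+1)) ((m+1 : ℕ) * (y - y₀) ^ m) y := by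
      have h5 := (hasDerivAt_pow (m+1) (y - y₀)).comp y ((hasDerivAt_id y).sub_const y₀)
      simp at h5
      push_cast
      exact h5
    have := this.const_mul (a m / (m+1))
    convert this using 1
    · rfl
    · rfl
    have : ((m:ℝ) + 1) ≠ 0 := by positivity
    push_cast
    field_simp
  have hBopen : IsOpen (Metric.ball y₀ t) := Metric.isOpen_ball
  have hBconn : IsPreconnected (Metric.ball y₀ t) := (convex_ball y₀ t).isPreconnected
  have hmem : ∀ y ∈ Metric.ball y₀ t, |y - y₀| ≤ t := by
    intro y hy
    rw [Metric.mem_ball, Real.dist_eq] at hy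
    exact hy.le
  have hy₀mem : y₀ ∈ Metric.ball y₀ t := Metric.mem_ball_self ht0
  have hGat : ∀ z ∈ Metric.ball y₀ t, HasDerivAt G (g z) z := by
    intro z hz
    have := (hδ (z - y₀) (lt_of_le_of_lt (hmem z hz) htδ)).2
    simpa using this
  have hzero : ∀ m, h m y₀ = 0 := by intro m; simp [hh]
  have hsum0 : Summable fun m => h m y₀ := by
    simpa [funext hzero] using summable_zero
  have hHy₀ : H y₀ = 0 := by simp [hH, funext hzero]
  -- derivative of H on the ball
  have hHderiv : ∀ y ∈ Metric.ball y₀ t, HasDerivAt H (g y) y := by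
    intro y hy
    have := hasDerivAt_tsum_of_isPreconnected hu hBopen hBconn
      (fun m y _ => hderiv m y) (fun m y hy => hbound m (y - y₀) (hmem y hy)) hy₀mem hsum0 hy
    have hgy : (∑' m, a m * (y - y₀) ^ m) = g y := by
      have h1 := (hδ (y - y₀) (lt_of_le_of_lt (hmem y hy) htδ)).1
      have : g (y₀ + (y - y₀)) = g y := by ring_nf
      rw [this] at h1
      rw [← h1.tsum_eq]
      exact tsum_congr fun n => by rw [smul_eq_mul]; ring
    rwa [hgy] at this
  -- G - H is constant on the ball
  have hconst : ∀ y ∈ Metric.ball y₀ t, G y = H y + G y₀ := by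
    intro y hy
    have hdiff : DifferentiableOn ℝ (fun y => G y - H y) (Metric.ball y₀ t) := by
      intro z hz
      exact ((hGat z hz).sub (hHderiv z hz)).differentiableAt.differentiableWithinAt
    have hfd : ∀ z ∈ Metric.ball y₀ t,
        fderivWithin ℝ (fun y => G y - H y) (Metric.ball y₀ t) z = 0 := by
      intro z hz
      have h0 : HasDerivAt (fun y => G y - H y) 0 z := by
        have := (hGat z hz).sub (hHderiv z hz); rw [sub_self] at this; exact this
      rw [fderivWithin_of_isOpen hBopen hz, h0.hasFDerivAt.fderiv]
      ext u
      simp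
    have := (convex_ball y₀ t).is_const_of_fderivWithin_eq_zero hdiff hfd hy hy₀mem
    rw [hHy₀] at this
    linarith [this]
  -- build the power series for G
  set c : ℕ → ℝ := fun n => if n = 0 then G y₀ else a (n-1) / n with hc
  refine ⟨FormalMultilinearSeries.ofScalars ℝ c, hasFPowerSeriesAt_iff.2 ?_⟩
  have hcoeff : ∀ n, (FormalMultilinearSeries.ofScalars ℝ c).coeff n = c n := by
    intro n
    simp [FormalMultilinearSeries.coeff, FormalMultilinearSeries.ofScalars, Pi.one_def,
      List.ofFn_const]
  rw [Metric.eventually_nhds_iff_ball]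
  refine ⟨t, ht0, fun z hz => ?_⟩
  rw [Metric.mem_ball, dist_zero_right, Real.norm_eq_abs] at hz
  have hy : y₀ + z ∈ Metric.ball y₀ t := by
    rw [Metric.mem_ball, Real.dist_eq]
    simpa using hz
  have hsummable : Summable fun m => h m (y₀ + z) := by
    apply Summable.of_norm_bounded (hu.mul_left t)
    intro m
    rw [hh]
    simp only [add_sub_cancel_left]
    have hCnn : 0 ≤ C := le_trans (by positivity) (hC 0)
    calc ‖a m / (m+1) * z ^ (m+1)‖ = |a m / (m+1) * z ^ (m+1)| := rfl
      _ ≤ |a m * z ^ m| * |z| := by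
          rw [abs_mul, abs_mul, abs_div, pow_succ, abs_mul]
          have h1 : |a m| / |(m:ℝ)+1| ≤ |a m| := by
            apply div_le_self (abs_nonneg _)
            rw [abs_of_pos (by positivity)]
            simp
          nlinarith [mul_nonneg (mul_nonneg (sub_nonneg.2 h1) (abs_nonneg (z^m)))
            (abs_nonneg z), abs_nonneg (z^m), abs_nonneg z]
      _ ≤ C * (1/2) ^ m * t := by
          apply mul_le_mul (hbound m z hz.le) hz.le (abs_nonneg _)
          exact mul_nonneg hCnn (by positivity)
      _ = t * (C * (1/2)^m) := by ring
  have hHsum : HasSum (fun m => h m (y₀ + z)) (H (y₀ + z)) := hsummable.hasSum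
  -- shift index
  have hfull : HasSum (fun n => z ^ n • c n) (G (y₀ + z)) := by
    rw [← hasSum_nat_add_iff' 1]
    have e1 : ∑ i ∈ Finset.range 1, z ^ i • c i = G y₀ := by simp [hc]
    have e2 : ∀ m : ℕ, z ^ (m+1) • c (m+1) = h m (y₀ + z) := by
      intro m
      rw [hh, smul_eq_mul]
      simp only [hc, Nat.succ_ne_zero, if_false, Nat.add_sub_cancel, add_sub_cancel_left]
      push_cast
      ring
    rw [e1, funext e2, hconst _ hy]
    simpa using hHsum
  simpa [hcoeff] using hfull

open MeasureTheory intervalIntegral Real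

theorem vertical_profile_props (α k : ℝ) (hα : 0 ≤ α) (hk : k < 0)
    (r : ℝ) (hr : r = -3 / (2 * k))
    (f : ℝ → ℝ)
    (hf : ∀ x, f x = -(1 / |k| ^ (α + 1)) *
      ∫ t in (-1 : ℝ)..(k * x + 1 / 2),
        t * (1 / 2 - t) ^ α / Real.sqrt (1 - t ^ 2)) :
    f r = 0 ∧ 0 < f 0 ∧ ContDiffOn ℝ (⊤ : ℕ∞) f (Set.Ioo 0 r) ∧
      ∀ x ∈ Set.Ioo (0 : ℝ) r,
        HasDerivAt f
          (x ^ α * (k * x + 1 / 2) / Real.sqrt (1 - (k * x + 1 / 2) ^ 2)) x := by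
  have hk0 : k ≠ 0 := ne_of_lt hk
  have hnk : (0:ℝ) < -k := by linarith
  have habs : |k| = -k := abs_of_neg hk
  set g : ℝ → ℝ := fun t => t * (1 / 2 - t) ^ α / Real.sqrt (1 - t ^ 2) with hgdef
  have hkr : k * r = -3/2 := by rw [hr]; field_simp
  -- continuity of g on (-1,1)
  have hgca : ∀ t ∈ Set.Ioo (-1:ℝ) 1, ContinuousAt g t := by
    intro t ht
    have hpos : (0:ℝ) < 1 - t ^ 2 := by nlinarith [ht.1, ht.2]
    have hs : Real.sqrt (1 - t ^ 2) ≠ 0 := ne_of_gt (Real.sqrt_pos.2 hpos)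
    apply ContinuousAt.div
    · exact continuousAt_id.mul ((continuousAt_const.sub continuousAt_id).rpow_const
        (Or.inr hα))
    · exact Real.continuous_sqrt.continuousAt.comp
        (continuousAt_const.sub (continuousAt_id.pow 2))
    · exact hs
  have hgc : ∀ s : Set ℝ, s ⊆ Set.Ioo (-1:ℝ) 1 → ContinuousOn g s := by
    intro s hs t ht
    exact (hgca t (hs ht)).continuousWithinAt
  -- integrability of g on [-1, 0]
  have hbase : IntervalIntegrable (fun t => (3/2:ℝ)^α * (1+t)^(-(1/2):ℝ)) volume (-1) 0 := by
    have h1 : IntervalIntegrable (fun x : ℝ => x ^ (-(1/2):ℝ)) volume 0 1 :=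
      intervalIntegral.intervalIntegrable_rpow' (by norm_num)
    have h2 := h1.comp_add_right 1
    norm_num at h2
    have h3 := h2.const_mul ((3/2:ℝ)^α)
    simpa [add_comm] using h3
  have hint_left : IntervalIntegrable g volume (-1) 0 := by
    apply hbase.mono_fun
    · apply ContinuousOn.aestronglyMeasurable _ measurableSet_uIoc
      apply hgc
      rw [Set.uIoc_of_le (by norm_num : (-1:ℝ) ≤ 0)]
      intro t ht
      exact ⟨ht.1, by rcases ht with ⟨h1, h2⟩; linarith⟩
    · rw [Filter.EventuallyLE, ae_restrict_iff' measurableSet_uIoc]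
      apply Filter.Eventually.of_forall
      intro t ht
      rw [Set.uIoc_of_le (by norm_num : (-1:ℝ) ≤ 0)] at ht
      obtain ⟨ht1, ht2⟩ := ht
      have h1t : (0:ℝ) < 1 + t := by linarith
      have hhalf : (0:ℝ) < 1/2 - t := by linarith
      have hsq : (0:ℝ) < 1 - t^2 := by nlinarith
      have key2 : (1+t) ^ (-(1/2):ℝ) = 1 / Real.sqrt (1+t) := by
        rw [Real.rpow_neg h1t.le, Real.sqrt_eq_rpow]
        norm_num
      have key1 : Real.sqrt (1+t) ≤ Real.sqrt (1 - t^2) :=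
        Real.sqrt_le_sqrt (by nlinarith)
      rw [Real.norm_eq_abs, Real.norm_eq_abs,
        show g t = t * (1 / 2 - t) ^ α / Real.sqrt (1 - t ^ 2) from rfl]
      rw [abs_div, abs_mul, abs_of_nonneg (Real.rpow_nonneg hhalf.le α),
        abs_of_nonneg (Real.sqrt_nonneg _), abs_mul,
        abs_of_nonneg (Real.rpow_nonneg (by norm_num : (0:ℝ) ≤ 3/2) α),
        abs_of_nonneg (Real.rpow_nonneg h1t.le _), key2]
      rw [mul_one_div]
      apply div_le_div₀ (Real.rpow_nonneg (by norm_num) α)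
      · calc |t| * (1/2 - t) ^ α ≤ 1 * (3/2:ℝ)^α := by
              apply mul_le_mul (by rw [abs_of_nonpos ht2]; linarith)
                (Real.rpow_le_rpow hhalf.le (by linarith) hα)
                (Real.rpow_nonneg hhalf.le α) (by norm_num)
          _ = (3/2:ℝ)^α := one_mul _
      · exact Real.sqrt_pos.2 h1t
      · exact key1
  -- integrability on compact subintervals of (-1,1)
  have hint_cc : ∀ c d : ℝ, c ∈ Set.Ioo (-1:ℝ) 1 → d ∈ Set.Ioo (-1:ℝ) 1 →
      IntervalIntegrable g volume c d := by
    intro c d hc hd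
    apply ContinuousOn.intervalIntegrable
    apply hgc
    intro t ht
    rw [Set.uIcc_eq_union] at ht
    rcases ht with ht | ht
    · exact ⟨lt_of_lt_of_le hc.1 ht.1, lt_of_le_of_lt ht.2 hd.2⟩
    · exact ⟨lt_of_lt_of_le hd.1 ht.1, lt_of_le_of_lt ht.2 hc.2⟩
  have hmem0 : (0:ℝ) ∈ Set.Ioo (-1:ℝ) 1 := by norm_num
  -- membership of k x + 1/2
  have hy_mem : ∀ x ∈ Set.Ioo 0 r, k * x + 1/2 ∈ Set.Ioo (-1:ℝ) (1/2:ℝ) := by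
    intro x hx
    constructor
    · have h1 : k * x > k * r := by
        apply mul_lt_mul_of_neg_left hx.2 hk
      rw [hkr] at h1; linarith
    · have : k * x < 0 := mul_neg_of_neg_of_pos hk hx.1
      linarith
  -- Part 4: derivative
  have hfd : ∀ x ∈ Set.Ioo (0:ℝ) r, HasDerivAt f
      (x ^ α * (k * x + 1 / 2) / Real.sqrt (1 - (k * x + 1 / 2) ^ 2)) x := by
    intro x hx
    obtain ⟨hy1, hy2⟩ := hy_mem x hx
    have hyI : k * x + 1/2 ∈ Set.Ioo (-1:ℝ) 1 := ⟨hy1, by linarith⟩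
    have hG : HasDerivAt (fun u => ∫ t in (0:ℝ)..u, g t) (g (k * x + 1/2)) (k * x + 1/2) :=
      intervalIntegral.integral_hasDerivAt_right (hint_cc 0 _ hmem0 hyI)
        (ContinuousOn.stronglyMeasurableAtFilter isOpen_Ioo (hgc _ (subset_refl _)) _ hyI)
        (hgca _ hyI)
    have hinner : HasDerivAt (fun x' : ℝ => k * x' + 1/2) k x := by
      simpa using ((hasDerivAt_id x).const_mul k).add_const (1/2:ℝ)
    have hcomp := (hG.comp x hinner).const_add (∫ t in (-1:ℝ)..0, g t)
    have hfin := (hcomp.const_mul (-(1 / |k| ^ (α + 1))))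
    have hev : f =ᶠ[nhds x] (fun x' => -(1 / |k| ^ (α + 1)) *
        ((∫ t in (-1:ℝ)..0, g t) + ∫ t in (0:ℝ)..(k * x' + 1/2), g t)) := by
      have hopen : IsOpen {x' : ℝ | k * x' + 1/2 ∈ Set.Ioo (-1:ℝ) 1} :=
        (isOpen_Ioo).preimage (by continuity)
      apply Filter.eventually_of_mem (hopen.mem_nhds hyI)
      intro x' hx'
      rw [hf x']
      congr 1
      rw [intervalIntegral.integral_add_adjacent_intervals hint_left (hint_cc 0 _ hmem0 hx')]
    have := hfin.congr_of_eventuallyEq hev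
    convert this using 1
    · rfl
    · rfl
    -- algebra: -(1/|k|^(α+1)) * (g (k x + 1/2) * k) = x^α (kx+1/2)/√(1-(kx+1/2)²)
    rw [show g (k * x + 1/2) = (k * x + 1/2) * (1/2 - (k * x + 1/2)) ^ α /
      Real.sqrt (1 - (k * x + 1/2) ^ 2) from rfl]
    have e1 : (1/2 - (k * x + 1/2) : ℝ) = (-k) * x := by ring
    rw [e1, Real.mul_rpow hnk.le hx.1.le, habs, Real.rpow_add hnk, Real.rpow_one]
    have hP : (0:ℝ) < (-k) ^ α := Real.rpow_pos_of_pos hnk α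
    have hs : (0:ℝ) < Real.sqrt (1 - (k * x + 1/2)^2) := by
      apply Real.sqrt_pos.2; nlinarith
    have key : ∀ P X Y S : ℝ, 0 < P → 0 < S →
        -(1 / (P * -k)) * (Y * (P * X) / S * k) = X * Y / S := by
      intro P X Y S hP hS
      field_simp
    exact (key _ _ _ _ hP hs).symm
  refine ⟨?_, ?_, ?_, hfd⟩
  -- Part 1 : f r = 0
  · rw [hf r, show k * r + 1/2 = (-1:ℝ) by rw [hkr]; norm_num,
      intervalIntegral.integral_same, mul_zero]
  -- Part 2 : 0 < f 0
  · rw [hf 0]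
    have hC : (0:ℝ) < 1 / |k| ^ (α + 1) := by
      apply div_pos one_pos
      apply Real.rpow_pos_of_pos
      rw [habs]; exact hnk
    rw [show k * 0 + 1/2 = (1/2:ℝ) by ring]
    have hm34 : (-3/4:ℝ) ∈ Set.Ioo (-1:ℝ) 1 := by norm_num
    have hm12 : (-1/2:ℝ) ∈ Set.Ioo (-1:ℝ) 1 := by norm_num
    have hp12 : (1/2:ℝ) ∈ Set.Ioo (-1:ℝ) 1 := by norm_num
    have hI1 : IntervalIntegrable g volume (-1) (-3/4) :=
      hint_left.mono_set (by rw [Set.uIcc_of_le (by norm_num : (-1:ℝ) ≤ -3/4),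
        Set.uIcc_of_le (by norm_num : (-1:ℝ) ≤ 0)]; exact Set.Icc_subset_Icc le_rfl (by norm_num))
    have hI2 : IntervalIntegrable g volume (-3/4) (-1/2) := hint_cc _ _ hm34 hm12
    have hI3 : IntervalIntegrable g volume (-1/2) 0 := hint_cc _ _ hm12 hmem0
    have hI4 : IntervalIntegrable g volume 0 (1/2) := hint_cc _ _ hmem0 hp12
    have hsplit : (∫ t in (-1:ℝ)..(1/2:ℝ), g t) =
        (∫ t in (-1:ℝ)..(-3/4:ℝ), g t) + ((∫ t in (-3/4:ℝ)..(-1/2:ℝ), g t) +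
          ((∫ t in (-1/2:ℝ)..(0:ℝ), g t) + (∫ t in (0:ℝ)..(1/2:ℝ), g t))) := by
      rw [intervalIntegral.integral_add_adjacent_intervals hI3 hI4,
        intervalIntegral.integral_add_adjacent_intervals hI2 (hI3.trans hI4),
        intervalIntegral.integral_add_adjacent_intervals hI1 (hI2.trans (hI3.trans hI4))]
    have hS1 : (∫ t in (-1:ℝ)..(-3/4:ℝ), g t) ≤ 0 := by
      have h := intervalIntegral.integral_nonneg (μ := volume) (f := fun t => -g t)
        (by norm_num : (-1:ℝ) ≤ -3/4) ?_
      · rw [intervalIntegral.integral_neg] at h; linarith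
      · intro u hu
        obtain ⟨hu1, hu2⟩ := hu
        show (0:ℝ) ≤ -(u * (1 / 2 - u) ^ α / Real.sqrt (1 - u ^ 2))
        rw [neg_nonneg]
        apply div_nonpos_of_nonpos_of_nonneg
        · apply mul_nonpos_of_nonpos_of_nonneg (by linarith)
          exact Real.rpow_nonneg (by linarith) α
        · exact Real.sqrt_nonneg _
    have hS2 : (∫ t in (-3/4:ℝ)..(-1/2:ℝ), g t) < 0 := by
      have h := intervalIntegral.intervalIntegral_pos_of_pos_on (f := fun t => -g t)
        hI2.neg ?_ (by norm_num)
      · rw [intervalIntegral.integral_neg] at h; linarith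
      · intro u hu
        obtain ⟨hu1, hu2⟩ := hu
        show (0:ℝ) < -(u * (1 / 2 - u) ^ α / Real.sqrt (1 - u ^ 2))
        rw [neg_pos]
        apply div_neg_of_neg_of_pos
        · apply mul_neg_of_neg_of_pos (by linarith)
          exact Real.rpow_pos_of_pos (by linarith) α
        · apply Real.sqrt_pos.2; nlinarith
    have hS34 : (∫ t in (-1/2:ℝ)..(0:ℝ), g t) + (∫ t in (0:ℝ)..(1/2:ℝ), g t) ≤ 0 := by
      have hcompneg : (∫ t in (-1/2:ℝ)..(0:ℝ), g t) = ∫ u in (0:ℝ)..(1/2:ℝ), g (-u) := by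
        rw [intervalIntegral.integral_comp_neg]
        norm_num
      have hIneg : IntervalIntegrable (fun u => g (-u)) volume 0 (1/2) := by
        apply ContinuousOn.intervalIntegrable
        intro u hu
        rw [Set.uIcc_of_le (by norm_num : (0:ℝ) ≤ 1/2)] at hu
        exact ContinuousWithinAt.comp (t := Set.Ioo (-1:ℝ) 1)
          ((hgca (-u) ⟨by linarith [hu.2], by linarith [hu.1]⟩).continuousWithinAt)
          continuous_neg.continuousWithinAt
          (fun v hv => by
            rw [Set.uIcc_of_le (by norm_num : (0:ℝ) ≤ 1/2)] at hv
            exact ⟨by linarith [hv.2], by linarith [hv.1]⟩)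
      rw [hcompneg, ← intervalIntegral.integral_add hIneg hI4]
      have h := intervalIntegral.integral_nonneg (μ := volume) (f := fun u => -(g (-u) + g u))
        (by norm_num : (0:ℝ) ≤ 1/2) ?_
      · rw [intervalIntegral.integral_neg] at h; linarith
      · intro u hu
        obtain ⟨hu1, hu2⟩ := hu
        have hsq : (0:ℝ) ≤ 1 - u^2 := by nlinarith
        have e : g (-u) = -(u * (1/2 + u) ^ α / Real.sqrt (1 - u^2)) := by
          rw [show g (-u) = (-u) * (1 / 2 - -u) ^ α / Real.sqrt (1 - (-u) ^ 2) from rfl,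
            neg_sq, show (1/2 - -u : ℝ) = 1/2 + u by ring]
          ring
        have e2 : g u = u * (1/2 - u) ^ α / Real.sqrt (1 - u^2) := rfl
        show (0:ℝ) ≤ -(g (-u) + g u)
        rw [e, e2, neg_nonneg]
        have : -(u * (1/2 + u) ^ α / Real.sqrt (1 - u^2)) + u * (1/2 - u) ^ α / Real.sqrt (1 - u^2)
            = u * ((1/2 - u)^α - (1/2 + u)^α) / Real.sqrt (1 - u^2) := by ring
        rw [this]
        apply div_nonpos_of_nonpos_of_nonneg _ (Real.sqrt_nonneg _)
        apply mul_nonpos_of_nonneg_of_nonpos hu1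
        rw [sub_nonpos]
        exact Real.rpow_le_rpow (by linarith) (by linarith) hα
    have hIneg : (∫ t in (-1:ℝ)..(1/2:ℝ), g t) < 0 := by
      rw [hsplit]; linarith
    have : -(1 / |k| ^ (α + 1)) < 0 := by linarith
    exact mul_pos_of_neg_of_neg this hIneg
  -- Part 3 : smoothness
  · intro x hx
    obtain ⟨hy1, hy2⟩ := hy_mem x hx
    have hpos : (0:ℝ) < 1 - (k*x+1/2)^2 := by nlinarith
    have h1 : AnalyticAt ℝ (fun x' : ℝ => x' ^ α) x :=
      (Real.contDiffAt_rpow_const_of_ne (n := (⊤ : WithTop ℕ∞)) (ne_of_gt hx.1)).analyticAt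
    have h2 : AnalyticAt ℝ (fun x' : ℝ => k * x' + 1/2) x :=
      (analyticAt_const.mul analyticAt_id).add analyticAt_const
    have h3 : AnalyticAt ℝ (fun x' : ℝ => 1 - (k*x'+1/2)^2) x :=
      analyticAt_const.sub (h2.pow 2)
    have h4 : AnalyticAt ℝ Real.sqrt (1 - (k*x+1/2)^2) :=
      (contDiffAt_sqrt (n := (⊤ : WithTop ℕ∞)) (ne_of_gt hpos)).analyticAt
    have hφ : AnalyticAt ℝ
        (fun x' => x' ^ α * (k * x' + 1 / 2) / Real.sqrt (1 - (k * x' + 1 / 2) ^ 2)) x :=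
      (h1.mul h2).div
        (AnalyticAt.comp (f := fun x' : ℝ => 1 - (k*x'+1/2)^2) h4 h3)
        (ne_of_gt (Real.sqrt_pos.2 hpos))
    have hev : ∀ᶠ y in nhds x, HasDerivAt f
        (y ^ α * (k * y + 1 / 2) / Real.sqrt (1 - (k * y + 1 / 2) ^ 2)) y := by
      apply Filter.eventually_of_mem (isOpen_Ioo.mem_nhds hx)
      exact hfd
    exact ((analyticAt_of_hasDerivAt hφ hev).contDiffAt).contDiffWithinAt
end

section
/- Let k < 0, r = −3/(2k), and f(x) = −(1/|k|^{α+1}) ∫_{−1}^{kx+1/2} t(1/2−t)^α/√(1−t²) dt for α ≥ 0. Then 2∫_0^r f(x) dx = −(2/|k|^{α+2}) ∫_{−1}^{1/2} t(1/2−t)^{α+1}/√(1−t²) dt. -/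
/-!
The substitution `u = k x + 1/2` maps `[0, r]` onto `[-1, 1/2]` (reversing orientation), so the
left side is `2 / |k| ^ (α + 2)` times `-∫_{-1}^{1/2} ∫_{-1}^{u} g`, where
`g t = t (1/2 - t)^α / √(1 - t²)`. By Fubini, `∫_{-1}^{1/2} ∫_{-1}^{u} g = ∫_{-1}^{1/2} (1/2 - t) g t`,
and `(1/2 - t) g t` is the integrand on the right. Fubini applies because `g` is a continuous
function times `1/√(1 - t²)`, which is integrable as the derivative of `arcsin`.
-/

open MeasureTheory Set intervalIntegral

theorem intervalIntegrable_one_div_sqrt_one_sub_sq :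
    IntervalIntegrable (fun t : ℝ => 1 / Real.sqrt (1 - t ^ 2)) volume (-1) 1 := by
  refine intervalIntegrable_deriv_of_nonneg Real.continuous_arcsin.continuousOn ?_ ?_
  · intro x hx
    rw [min_eq_left (by norm_num), max_eq_right (by norm_num)] at hx
    exact Real.hasDerivAt_arcsin hx.1.ne' hx.2.ne
  · intro x _
    positivity

theorem ContinuousOn.intervalIntegrable_div_sqrt_one_sub_sq {h : ℝ → ℝ}
    (hh : ContinuousOn h (Icc (-1) 1)) :
    IntervalIntegrable (fun t => h t / Real.sqrt (1 - t ^ 2)) volume (-1) 1 := by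
  simpa only [mul_one_div] using intervalIntegrable_one_div_sqrt_one_sub_sq.continuousOn_mul
    (by rwa [uIcc_of_le (by norm_num)])

theorem integral_integral_eq_integral_sub_smul {E : Type*} [NormedAddCommGroup E]
    [NormedSpace ℝ E] [CompleteSpace E] {g : ℝ → E} {a b : ℝ} (hab : a ≤ b)
    (hg : IntervalIntegrable g volume a b) :
    ∫ u in a..b, ∫ t in a..u, g t = ∫ t in a..b, (b - t) • g t := by
  set μ := volume.restrict (Ioc a b)
  set G : ℝ × ℝ → E := {q : ℝ × ℝ | q.2 ≤ q.1}.indicator (fun q => g q.2)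
  have hG : Integrable G (μ.prod μ) := by
    have : IsFiniteMeasure μ := ⟨by simp [μ]⟩
    exact (((intervalIntegrable_iff_integrableOn_Ioc_of_le hab).1 hg).comp_snd μ).indicator
      (measurableSet_le measurable_snd measurable_fst)
  have inner_left : ∀ u ∈ Ioc a b, ∫ t, G (u, t) ∂μ = ∫ t in a..u, g t := by
    intro u hu
    have : (fun t => G (u, t)) = (Iic u).indicator g := by
      funext t; simp [G, Set.indicator_apply]
    rw [this, setIntegral_indicator measurableSet_Iic, Ioc_inter_Iic, min_eq_right hu.2,
      integral_of_le hu.1.le]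
  have inner_right : ∀ t ∈ Ioc a b, ∫ u, G (u, t) ∂μ = (b - t) • g t := by
    intro t ht
    have : (fun u => G (u, t)) = (Ici t).indicator (fun _ => g t) := by
      funext u; simp [G, Set.indicator_apply]
    have hslice : Ioc a b ∩ Ici t = Icc t b := by
      ext u
      simp only [mem_inter_iff, mem_Ioc, mem_Ici, mem_Icc]
      constructor
      · rintro ⟨⟨_, hub⟩, htu⟩; exact ⟨htu, hub⟩
      · rintro ⟨htu, hub⟩; exact ⟨⟨ht.1.trans_le htu, hub⟩, htu⟩
    rw [this, setIntegral_indicator measurableSet_Ici, setIntegral_const, hslice,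
      measureReal_def, Real.volume_Icc, ENNReal.toReal_ofReal (by linarith [ht.2])]
  calc ∫ u in a..b, ∫ t in a..u, g t
      = ∫ u, ∫ t, G (u, t) ∂μ ∂μ := by
        rw [integral_of_le hab]; exact (setIntegral_congr_fun measurableSet_Ioc inner_left).symm
    _ = ∫ t, ∫ u, G (u, t) ∂μ ∂μ := integral_integral_swap hG
    _ = ∫ t in a..b, (b - t) • g t := by
        rw [integral_of_le hab]; exact setIntegral_congr_fun measurableSet_Ioc inner_right

theorem vertical_profile_area (α k : ℝ) (hα : 0 ≤ α) (hk : k < 0)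
    (r : ℝ) (hr : r = -3 / (2 * k))
    (f : ℝ → ℝ)
    (hf : ∀ x, f x = -(1 / |k| ^ (α + 1)) *
      ∫ t in (-1 : ℝ)..(k * x + 1 / 2),
        t * (1 / 2 - t) ^ α / Real.sqrt (1 - t ^ 2)) :
    2 * ∫ x in (0 : ℝ)..r, f x =
      -(2 / |k| ^ (α + 2)) *
        ∫ t in (-1 : ℝ)..(1 / 2),
          t * (1 / 2 - t) ^ (α + 1) / Real.sqrt (1 - t ^ 2) := by
  set g : ℝ → ℝ := fun t => t * (1 / 2 - t) ^ α / Real.sqrt (1 - t ^ 2)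
  have hg : IntervalIntegrable g volume (-1) (1 / 2) := by
    refine (ContinuousOn.intervalIntegrable_div_sqrt_one_sub_sq ?_).mono_set ?_
    · exact (continuous_id.mul
        ((Real.continuous_rpow_const hα).comp (continuous_const.sub continuous_id))).continuousOn
    · rw [uIcc_of_le (by norm_num), uIcc_of_le (by norm_num)]
      exact Icc_subset_Icc_right (by norm_num)
  have substitution : ∫ x in (0 : ℝ)..r, ∫ t in (-1 : ℝ)..(k * x + 1 / 2), g t
      = -k⁻¹ * ∫ u in (-1 : ℝ)..(1 / 2), ∫ t in (-1 : ℝ)..u, g t := by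
    have hkr : k * r + 1 / 2 = -1 := by
      rw [hr]; field_simp [hk.ne]; norm_num
    rw [integral_comp_mul_add (fun u => ∫ t in (-1 : ℝ)..u, g t) hk.ne, mul_zero, zero_add, hkr,
      integral_symm, smul_eq_mul, mul_neg, neg_mul]
  have fubini : ∫ u in (-1 : ℝ)..(1 / 2), ∫ t in (-1 : ℝ)..u, g t
      = ∫ t in (-1 : ℝ)..(1 / 2), t * (1 / 2 - t) ^ (α + 1) / Real.sqrt (1 - t ^ 2) := by
    rw [integral_integral_eq_integral_sub_smul (by norm_num) hg]
    refine integral_congr fun t ht => ?_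
    rw [uIcc_of_le (by norm_num)] at ht
    simp only [g, smul_eq_mul, Real.rpow_add_one' (sub_nonneg.2 ht.2) (by positivity : α + 1 ≠ 0)]
    ring
  have hpow : |k| ^ (α + 2) = |k| ^ (α + 1) * -k := by
    rw [show α + 2 = α + 1 + 1 by ring, Real.rpow_add_one (abs_pos.2 hk.ne).ne', abs_of_neg hk]
  have hpos : 0 < |k| ^ (α + 1) := Real.rpow_pos_of_pos (abs_pos.2 hk.ne) _
  simp only [hf]
  rw [intervalIntegral.integral_const_mul, substitution, fubini, hpow]
  field_simp
end

section
/- Let α > 0, k < 0, r = −3/(2k), and f(x) = −(1/|k|^{α+1}) ∫_{−1}^{kx+1/2} t(1/2−t)^α/√(1−t²) dt on [0,r]. Define the transformed profile f̂(ξ) = f(((α+1)ξ)^{1/(α+1)}). Then lim_{ξ→0⁺} f̂'(ξ) = lim_{x→0⁺} f'(x)/x^α = 1/√3; in particular the transformed profile meets the vertical axis at angle π/2 + π/6 = 2π/3. -/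
/-!
By the fundamental theorem of calculus, `f'(x) = x^α · b / √(1 - b²)` with `b = kx + 1/2`, because
`1/2 - b = |k| x` turns the factor `(1/2 - b)^α` into `|k|^α x^α`. The integrand is integrable at
`t = -1`, where it behaves like `1/√(1 + t)`. The change of variables `ξ = x^(α+1)/(α+1)` has
`dξ = x^α dx`, so `f̂'(ξ) = f'(x)/x^α` with `x = ((α+1)ξ)^(1/(α+1))`, and both tend to
`(1/2)/√(3/4) = 1/√3 = tan(π/6)` as `x → 0⁺`.
-/

open Real Filter Set Topology MeasureTheory

theorem intervalIntegrable_div_sqrt_one_add {h : ℝ → ℝ} {b : ℝ} (hb : -1 ≤ b)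
    (hh : ContinuousOn h (Icc (-1) b)) :
    IntervalIntegrable (fun t => h t / √(1 + t)) volume (-1) b := by
  have hsing : IntervalIntegrable (fun t : ℝ => (t + 1) ^ (-(1 / 2) : ℝ)) volume (-1) b := by
    simpa using (intervalIntegral.intervalIntegrable_rpow' (a := 0) (b := b + 1)
      (r := -(1 / 2)) (by norm_num)).comp_add_right 1
  refine (hsing.continuousOn_mul (by rwa [uIcc_of_le hb])).congr_uIoo fun t ht => ?_
  rw [uIoo_of_le hb] at ht
  simp only
  rw [rpow_neg (by linarith [ht.1]), ← sqrt_eq_rpow, add_comm t, div_eq_mul_inv]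

noncomputable def profileIntegrand (α t : ℝ) : ℝ := t * (1 / 2 - t) ^ α / √(1 - t ^ 2)

theorem profileIntegrand_eq_div_sqrt {α t : ℝ} (ht : t ≤ 1) :
    profileIntegrand α t = t * (1 / 2 - t) ^ α / √(1 - t) / √(1 + t) := by
  rw [profileIntegrand, div_div, ← sqrt_mul (by linarith)]
  ring_nf

theorem intervalIntegrable_profileIntegrand (α : ℝ) {b : ℝ} (hb₁ : -1 ≤ b) (hb₂ : b < 1 / 2) :
    IntervalIntegrable (profileIntegrand α) volume (-1) b := by
  have hcont : ContinuousOn (fun t => t * (1 / 2 - t) ^ α / √(1 - t)) (Icc (-1) b) := by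
    intro t ht
    have h₁ : 0 < 1 / 2 - t := by linarith [ht.2]
    have h₂ : 0 < √(1 - t) := sqrt_pos.2 (by linarith [ht.2])
    exact ((continuousAt_id.mul ((continuousAt_const.sub continuousAt_id).rpow_const
      (Or.inl h₁.ne'))).div (continuousAt_const.sub continuousAt_id).sqrt
        h₂.ne').continuousWithinAt
  refine (intervalIntegrable_div_sqrt_one_add hb₁ hcont).congr_uIoo fun t ht => ?_
  rw [uIoo_of_le hb₁] at ht
  exact (profileIntegrand_eq_div_sqrt (by linarith [ht.2])).symm

theorem continuousAt_profileIntegrand (α : ℝ) {b : ℝ} (hb₁ : -1 < b) (hb₂ : b < 1 / 2) :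
    ContinuousAt (profileIntegrand α) b := by
  have h₁ : 0 < 1 / 2 - b := by linarith
  have h₂ : 0 < √(1 - b ^ 2) := sqrt_pos.2 (by nlinarith)
  exact (continuousAt_id.mul ((continuousAt_const.sub continuousAt_id).rpow_const
    (Or.inl h₁.ne'))).div (continuousAt_const.sub (continuousAt_id.pow 2)).sqrt h₂.ne'

theorem hasDerivAt_integral_profileIntegrand (α : ℝ) {b : ℝ} (hb₁ : -1 < b) (hb₂ : b < 1 / 2) :
    HasDerivAt (fun y => ∫ t in (-1 : ℝ)..y, profileIntegrand α t) (profileIntegrand α b) b := by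
  have hmeas : Measurable (profileIntegrand α) := by unfold profileIntegrand; fun_prop
  exact intervalIntegral.integral_hasDerivAt_right
    (intervalIntegrable_profileIntegrand α hb₁.le hb₂)
    hmeas.aestronglyMeasurable.stronglyMeasurableAtFilter (continuousAt_profileIntegrand α hb₁ hb₂)

noncomputable def profile (α k x : ℝ) : ℝ :=
  -(1 / |k| ^ (α + 1)) * ∫ t in (-1 : ℝ)..(k * x + 1 / 2), profileIntegrand α t

theorem hasDerivAt_profile {α k x : ℝ} (hk : k < 0) (hx : 0 < x) (hb : -1 < k * x + 1 / 2) :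
    HasDerivAt (profile α k) (x ^ α * ((k * x + 1 / 2) / √(1 - (k * x + 1 / 2) ^ 2))) x := by
  have hb₂ : k * x + 1 / 2 < 1 / 2 := by nlinarith
  have hchain := ((hasDerivAt_integral_profileIntegrand α hb hb₂).comp x
    (((hasDerivAt_id x).const_mul k).add_const (1 / 2))).const_mul (-(1 / |k| ^ (α + 1)))
  refine hchain.congr_deriv ?_
  rw [profileIntegrand, show 1 / 2 - (k * x + 1 / 2) = |k| * x by rw [abs_of_neg hk]; ring,
    mul_rpow (abs_nonneg k) hx.le, rpow_add_one (abs_pos.2 hk.ne).ne', abs_of_neg hk]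
  have hkα : 0 < (-k) ^ α := rpow_pos_of_pos (by linarith) α
  field_simp [hk.ne, hkα.ne']

theorem tendsto_profile_slope (k : ℝ) :
    Tendsto (fun x => (k * x + 1 / 2) / √(1 - (k * x + 1 / 2) ^ 2)) (𝓝 0) (𝓝 (1 / √3)) := by
  have h₀ : (1 / 2 : ℝ) / √(1 - (1 / 2) ^ 2) = 1 / √3 := by
    rw [show 1 - (1 / 2 : ℝ) ^ 2 = 3 / 2 ^ 2 by norm_num, sqrt_div' _ (by norm_num),
      sqrt_sq (by norm_num)]
    field_simp
  have hc : ContinuousAt (fun x => (k * x + 1 / 2) / √(1 - (k * x + 1 / 2) ^ 2)) 0 := by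
    fun_prop (disch := norm_num)
  rwa [ContinuousAt, mul_zero, zero_add, h₀] at hc

theorem hasDerivAt_comp_rpow_inv {g : ℝ → ℝ} {α c ξ : ℝ} (hα : 0 < α + 1) (hξ : 0 < ξ)
    (hg : HasDerivAt g ((((α + 1) * ξ) ^ (1 / (α + 1))) ^ α * c)
      (((α + 1) * ξ) ^ (1 / (α + 1)))) :
    HasDerivAt (fun ξ => g (((α + 1) * ξ) ^ (1 / (α + 1)))) c ξ := by
  set m := (α + 1) * ξ
  have hm : 0 < m := mul_pos hα hξ
  have hexp : 1 / (α + 1) * α + (1 / (α + 1) - 1) = 0 := by field_simp; ring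
  refine (hg.comp ξ
    (((hasDerivAt_id ξ).const_mul (α + 1)).rpow_const (Or.inl hm.ne'))).congr_deriv ?_
  rw [← rpow_mul hm.le]
  calc _ = (m ^ (1 / (α + 1) * α) * m ^ (1 / (α + 1) - 1)) * c * (1 / (α + 1) * (α + 1)) := by
        simp only [id]; ring
    _ = c := by rw [← rpow_add hm, hexp, rpow_zero, one_div_mul_cancel hα.ne']; ring

theorem tendsto_deriv_div_rpow {g ψ : ℝ → ℝ} {α L : ℝ}
    (hg : ∀ᶠ x in 𝓝[>] 0, HasDerivAt g (x ^ α * ψ x) x) (hψ : Tendsto ψ (𝓝[>] 0) (𝓝 L)) :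
    Tendsto (fun x => deriv g x / x ^ α) (𝓝[>] 0) (𝓝 L) :=
  hψ.congr' <| by
    filter_upwards [hg, self_mem_nhdsWithin] with x hx hx₀
    rw [hx.deriv, mul_div_cancel_left₀ _ (rpow_pos_of_pos hx₀ α).ne']

theorem tendsto_rpow_inv_nhdsGT_zero {α : ℝ} (hα : 0 < α + 1) :
    Tendsto (fun ξ : ℝ => ((α + 1) * ξ) ^ (1 / (α + 1))) (𝓝[>] 0) (𝓝[>] 0) := by
  refine tendsto_nhdsWithin_of_tendsto_nhds_of_eventually_within _ ?_ ?_
  · have hc : ContinuousAt (fun ξ : ℝ => ((α + 1) * ξ) ^ (1 / (α + 1))) 0 :=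
      (continuousAt_const.mul continuousAt_id).rpow_const (Or.inr (by positivity))
    simpa [zero_rpow (inv_pos.2 hα).ne'] using
      hc.tendsto.mono_left (nhdsWithin_le_nhds (s := Ioi 0))
  · filter_upwards [self_mem_nhdsWithin] with ξ hξ
    exact rpow_pos_of_pos (mul_pos hα hξ) _

theorem tendsto_deriv_comp_rpow_inv {g ψ : ℝ → ℝ} {α L : ℝ} (hα : 0 < α + 1)
    (hg : ∀ᶠ x in 𝓝[>] 0, HasDerivAt g (x ^ α * ψ x) x) (hψ : Tendsto ψ (𝓝[>] 0) (𝓝 L)) :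
    Tendsto (deriv fun ξ => g (((α + 1) * ξ) ^ (1 / (α + 1)))) (𝓝[>] 0) (𝓝 L) := by
  have hX := tendsto_rpow_inv_nhdsGT_zero hα
  refine (hψ.comp hX).congr' ?_
  filter_upwards [hX.eventually hg, self_mem_nhdsWithin] with ξ hξ hξ₀
  exact (hasDerivAt_comp_rpow_inv hα hξ₀ hξ).deriv.symm

theorem transformed_profile_angle_general (α k : ℝ) (hα : 0 < α) (hk : k < 0)
    (f : ℝ → ℝ)
    (hf : ∀ x, f x = -(1 / |k| ^ (α + 1)) *
      ∫ t in (-1 : ℝ)..(k * x + 1 / 2),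
        t * (1 / 2 - t) ^ α / Real.sqrt (1 - t ^ 2))
    (fhat : ℝ → ℝ)
    (hfhat : ∀ ξ, fhat ξ = f (((α + 1) * ξ) ^ (1 / (α + 1)))) :
    Filter.Tendsto (deriv fhat) (nhdsWithin 0 (Set.Ioi 0))
        (nhds (1 / Real.sqrt 3)) ∧
      Filter.Tendsto (fun x => deriv f x / x ^ α) (nhdsWithin 0 (Set.Ioi 0))
        (nhds (1 / Real.sqrt 3)) ∧
      Real.pi / 2 + Real.arctan (1 / Real.sqrt 3) = 2 * Real.pi / 3 := by
  obtain rfl : f = profile α k := funext hf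
  obtain rfl : fhat = fun ξ => profile α k (((α + 1) * ξ) ^ (1 / (α + 1))) := funext hfhat
  have hb : ∀ᶠ x in 𝓝 (0 : ℝ), -1 < k * x + 1 / 2 :=
    continuousAt_const.eventually_lt (by fun_prop) (by norm_num)
  have hderiv : ∀ᶠ x in 𝓝[>] 0, HasDerivAt (profile α k)
      (x ^ α * ((k * x + 1 / 2) / √(1 - (k * x + 1 / 2) ^ 2))) x := by
    filter_upwards [self_mem_nhdsWithin, nhdsWithin_le_nhds hb] with x hx hxb
    exact hasDerivAt_profile hk hx hxb
  have hslope := (tendsto_profile_slope k).mono_left (nhdsWithin_le_nhds (s := Ioi 0))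
  refine ⟨tendsto_deriv_comp_rpow_inv (by linarith) hderiv hslope,
    tendsto_deriv_div_rpow hderiv hslope, ?_⟩
  rw [one_div, arctan_inv_sqrt_three]
  ring

theorem transformed_profile_angle (α k : ℝ) (hα : 0 < α) (hk : k < 0)
    (r : ℝ) (hr : r = -3 / (2 * k))
    (f : ℝ → ℝ)
    (hf : ∀ x, f x = -(1 / |k| ^ (α + 1)) *
      ∫ t in (-1 : ℝ)..(k * x + 1 / 2),
        t * (1 / 2 - t) ^ α / Real.sqrt (1 - t ^ 2))
    (fhat : ℝ → ℝ)
    (hfhat : ∀ ξ, fhat ξ = f (((α + 1) * ξ) ^ (1 / (α + 1)))) :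
    Filter.Tendsto (deriv fhat) (nhdsWithin 0 (Set.Ioi 0))
        (nhds (1 / Real.sqrt 3)) ∧
      Filter.Tendsto (fun x => deriv f x / x ^ α) (nhdsWithin 0 (Set.Ioi 0))
        (nhds (1 / Real.sqrt 3)) ∧
      Real.pi / 2 + Real.arctan (1 / Real.sqrt 3) = 2 * Real.pi / 3 :=
  transformed_profile_angle_general α k hα hk f hf fhat hfhat
end

section
/- For α = 1 and v > 0, the Grushin perimeter of the minimal double bubble with vertical interface equals (9√3 + 8π)^{1/3}(3/2)^{2/3} v^{2/3}, while that of the minimal double bubble with horizontal interface equals 3(3/2)^{2/3} v^{2/3}; and since 9√3 + 8π > 27, the horizontal-interface value is strictly smaller. -/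
/-!
Both perimeters are `2 / r²` times an integral with an elementary antiderivative:
`3/2 arcsin t + (5/2 - t/2) √(1 - t²)` for the vertical interface and `t²/2 + 2 √(1 - t²)` for
the horizontal one, giving `π + 9√3/8` and `4 - 5/8 = 27/8`. The first integrand blows up at
`t = -1` but is nonnegative, which makes it integrable. The resulting identities between cube
roots are checked after cubing both sides, and the comparison is `3 = 27^(1/3) < (9√3 + 8π)^(1/3)`.
-/

open Real Set intervalIntegral

theorem integral_eq_sub_of_hasDerivAt_of_nonneg {f F : ℝ → ℝ} {a b : ℝ} (hab : a ≤ b)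
    (hcont : ContinuousOn F (Icc a b)) (hderiv : ∀ x ∈ Ioo a b, HasDerivAt F (f x) x)
    (hf : ∀ x ∈ Ioo a b, 0 ≤ f x) :
    ∫ x in a..b, f x = F b - F a :=
  integral_eq_sub_of_hasDerivAt_of_le hab hcont hderiv <|
    (intervalIntegrable_iff_integrableOn_Ioc_of_le hab).2 <|
      integrableOn_deriv_of_nonneg hcont hderiv hf

theorem hasDerivAt_sqrt_one_sub_sq {x : ℝ} (hx : x ^ 2 < 1) :
    HasDerivAt (fun t => √(1 - t ^ 2)) (-x / √(1 - x ^ 2)) x := by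
  convert ((hasDerivAt_pow 2 x).const_sub 1).sqrt (sub_pos.2 hx).ne' using 1
  field_simp
  ring

theorem integral_vertical_profile :
    ∫ t in (-1 : ℝ)..(1 / 2), (2 - t) * (1 / 2 - t) / √(1 - t ^ 2) = π + 9 * √3 / 8 := by
  have hF : ∀ x ∈ Ioo (-1 : ℝ) (1 / 2), HasDerivAt
      (fun t => 3 / 2 * arcsin t + (5 / 2 - t / 2) * √(1 - t ^ 2))
      ((2 - x) * (1 / 2 - x) / √(1 - x ^ 2)) x := by
    rintro x ⟨hx₁, hx₂⟩
    have hx : x ^ 2 < 1 := by nlinarith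
    have hs : 0 < √(1 - x ^ 2) := sqrt_pos.2 (by linarith)
    refine (((hasDerivAt_arcsin (by linarith) (by linarith)).const_mul (3 / 2)).add
      (((hasDerivAt_id' x).div_const 2).const_sub (5 / 2) |>.mul
        (hasDerivAt_sqrt_one_sub_sq hx))).congr_deriv ?_
    field_simp
    rw [sq_sqrt (by linarith)]
    ring
  rw [integral_eq_sub_of_hasDerivAt_of_nonneg (by norm_num) (by fun_prop) hF
    fun x hx => div_nonneg (mul_nonneg (by linarith [hx.2]) (by linarith [hx.2])) (sqrt_nonneg _)]
  have harcsin : arcsin (1 / 2) = π / 6 := by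
    rw [← sin_pi_div_six, arcsin_sin] <;> linarith [pi_pos]
  have hsqrt : √(1 - (1 / 2 : ℝ) ^ 2) = √3 / 2 := by
    rw [← cos_arcsin, harcsin, cos_pi_div_six]
  simp only [harcsin, hsqrt, arcsin_neg_one]
  norm_num
  ring

theorem integral_horizontal_profile :
    ∫ t in (0 : ℝ)..(√3 / 2), t * (1 - 2 / √(1 - t ^ 2)) = -(5 / 8) := by
  have hsq : ∀ x ∈ uIcc (0 : ℝ) (√3 / 2), x ^ 2 < 1 := by
    intro x hx
    rw [uIcc_of_le (by positivity)] at hx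
    have : √3 < 2 := by rw [sqrt_lt' two_pos]; norm_num
    nlinarith [hx.1, hx.2]
  have hG : ∀ x ∈ uIcc (0 : ℝ) (√3 / 2), HasDerivAt (fun t => t ^ 2 / 2 + 2 * √(1 - t ^ 2))
      (x * (1 - 2 / √(1 - x ^ 2))) x := by
    intro x hx
    refine (((hasDerivAt_pow 2 x).div_const 2).add
      ((hasDerivAt_sqrt_one_sub_sq (hsq x hx)).const_mul 2)).congr_deriv ?_
    push_cast
    ring
  have hcont : ContinuousOn (fun t : ℝ => t * (1 - 2 / √(1 - t ^ 2))) (uIcc 0 (√3 / 2)) :=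
    continuousOn_id.mul <| continuousOn_const.sub <| continuousOn_const.div (by fun_prop)
      fun x hx => (sqrt_pos.2 (sub_pos.2 (hsq x hx))).ne'
  rw [integral_eq_sub_of_hasDerivAt hG hcont.intervalIntegrable]
  have hsqrt : √(1 - (√3 / 2) ^ 2) = 1 / 2 := by
    rw [div_pow, sq_sqrt (by norm_num), sqrt_eq_iff_eq_sq] <;> norm_num
  rw [hsqrt]
  simp only [div_pow, sq_sqrt (show (0 : ℝ) ≤ 3 by norm_num)]
  norm_num

theorem rpow_div_three_pow_three {x : ℝ} (hx : 0 ≤ x) (y : ℝ) : (x ^ (y / 3)) ^ 3 = x ^ y := by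
  rw [← rpow_mul_natCast hx]
  norm_num

theorem two_div_sq_rpow_one_third_pow_three {x : ℝ} (hx : 0 ≤ x) :
    (2 / (x ^ ((1 : ℝ) / 3)) ^ 2) ^ 3 = 8 / x ^ 2 := by
  rw [div_pow, pow_right_comm, rpow_div_three_pow_three hx, rpow_one]
  norm_num

theorem vertical_perimeter_eq {a v : ℝ} (ha : 0 < a) (hv : 0 < v) :
    2 / ((a / (12 * v)) ^ ((1 : ℝ) / 3)) ^ 2 * (a / 8) =
      a ^ ((1 : ℝ) / 3) * (3 / 2 : ℝ) ^ ((2 : ℝ) / 3) * v ^ ((2 : ℝ) / 3) := by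
  rw [← pow_left_inj₀ (by positivity) (by positivity) three_ne_zero]
  simp only [mul_pow, two_div_sq_rpow_one_third_pow_three (by positivity : 0 ≤ a / (12 * v)),
    rpow_div_three_pow_three ha.le, rpow_div_three_pow_three hv.le,
    rpow_div_three_pow_three (by norm_num : (0 : ℝ) ≤ 3 / 2), rpow_one, rpow_two]
  field_simp
  ring

theorem horizontal_perimeter_eq {v : ℝ} (hv : 0 < v) :
    2 / ((9 / (4 * v)) ^ ((1 : ℝ) / 3)) ^ 2 * (27 / 8) =
      3 * (3 / 2 : ℝ) ^ ((2 : ℝ) / 3) * v ^ ((2 : ℝ) / 3) := by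
  rw [← pow_left_inj₀ (by positivity) (by positivity) three_ne_zero]
  simp only [mul_pow, two_div_sq_rpow_one_third_pow_three (by positivity : 0 ≤ 9 / (4 * v)),
    rpow_div_three_pow_three hv.le,
    rpow_div_three_pow_three (by norm_num : (0 : ℝ) ≤ 3 / 2), rpow_two]
  field_simp
  ring

theorem three_lt_rpow_one_third {x : ℝ} (hx : 27 < x) : 3 < x ^ ((1 : ℝ) / 3) := by
  rw [one_div, lt_rpow_inv_iff_of_pos (by norm_num) (by linarith) (by norm_num)]
  norm_num [hx]

theorem twenty_seven_lt_nine_mul_sqrt_three_add_eight_mul_pi : 27 < 9 * √3 + 8 * π := by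
  have : 1 < √3 := by rw [lt_sqrt zero_le_one]; norm_num
  linarith [pi_gt_three]

theorem grushin_double_bubble_comparison (v k h : ℝ) (hv : 0 < v)
    (hk : k = -((8 * Real.pi + 9 * Real.sqrt 3) / (12 * v)) ^ ((1 : ℝ) / 3))
    (hh : h = (9 / (4 * v)) ^ ((1 : ℝ) / 3)) :
    (2 / k ^ 2) *
        (∫ t in (-1 : ℝ)..(1 / 2), (2 - t) * (1 / 2 - t) / Real.sqrt (1 - t ^ 2)) =
      (9 * Real.sqrt 3 + 8 * Real.pi) ^ ((1 : ℝ) / 3) *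
        ((3 : ℝ) / 2) ^ ((2 : ℝ) / 3) * v ^ ((2 : ℝ) / 3) ∧
    (2 / h ^ 2) *
        ((2 * ∫ t in (0 : ℝ)..Real.pi, Real.sin t) +
          ∫ t in (0 : ℝ)..(Real.sqrt 3 / 2),
            t * (1 - 2 / Real.sqrt (1 - t ^ 2))) =
      3 * ((3 : ℝ) / 2) ^ ((2 : ℝ) / 3) * v ^ ((2 : ℝ) / 3) ∧
    27 < 9 * Real.sqrt 3 + 8 * Real.pi ∧
    3 * ((3 : ℝ) / 2) ^ ((2 : ℝ) / 3) * v ^ ((2 : ℝ) / 3) <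
      (9 * Real.sqrt 3 + 8 * Real.pi) ^ ((1 : ℝ) / 3) *
        ((3 : ℝ) / 2) ^ ((2 : ℝ) / 3) * v ^ ((2 : ℝ) / 3) := by
  have h27 := twenty_seven_lt_nine_mul_sqrt_three_add_eight_mul_pi
  refine ⟨?_, ?_, h27, ?_⟩
  · rw [hk, neg_sq, integral_vertical_profile, add_comm (9 * √3),
      show π + 9 * √3 / 8 = (8 * π + 9 * √3) / 8 by ring]
    exact vertical_perimeter_eq (by linarith) hv
  · rw [hh, integral_sin, cos_zero, cos_pi, integral_horizontal_profile]
    convert horizontal_perimeter_eq hv using 2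
    norm_num
  · gcongr
    exact three_lt_rpow_one_third h27
end
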